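/- arXiv:1306.3045 — 3 statements merged into one kernel-verified Lean document; each statement's English description precedes it below -/
import Mathlib

section
/- Let G be a finite group and 0 → Q → P → ℤ → 0 a short exact sequence of G-modules, where G acts trivially on ℤ, P is ℤ-free, and the image of P^G in ℤ is dℤ for some positive integer d. Then there is an exact sequence 0 → ℤ/dℤ → H¹(G, Q) → H¹(G, P) → 0. -/
/-!
The long exact cohomology sequence of `0 → Q → P → ℤ → 0` reads
`H⁰(G, P) → H⁰(G, ℤ) = ℤ → H¹(G, Q) → H¹(G, P) → H¹(G, ℤ)`,
and `H¹(G, ℤ) = Hom(G, ℤ)` vanishes because `G` is finite and `ℤ` is torsion free.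
The kernel of the connecting map `ℤ → H¹(G, Q)` is the image `φ(P^G) = dℤ`, so it factors
through an injection `ℤ/dℤ → H¹(G, Q)` whose image is the kernel of the surjection
`H¹(G, Q) → H¹(G, P)`.
-/

open CategoryTheory

universe u

theorem AddMonoidHom.subsingleton_of_finite_of_isAddTorsionFree {M N : Type*} [AddGroup M]
    [Finite M] [AddGroup N] [IsAddTorsionFree N] : Subsingleton (M →+ N) := by
  refine ⟨fun f g => AddMonoidHom.ext fun x => ?_⟩
  have hvanish : ∀ f : M →+ N, f x = 0 := fun f => by
    have h : addOrderOf x • f x = 0 := by rw [← map_nsmul, addOrderOf_nsmul_eq_zero, map_zero]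
    exact (nsmul_eq_zero_iff_right (addOrderOf_pos x).ne').1 h
  rw [hvanish f, hvanish g]

theorem ZMod.exists_lift_injective_range_eq {C : Type*} [AddCommGroup C] (d : ℕ) (δ : ℤ →+ C)
    (hker : ∀ m, δ m = 0 ↔ (d : ℤ) ∣ m) :
    ∃ α : ZMod d →+ C, Function.Injective α ∧ α.range = δ.range := by
  let α := ZMod.lift d ⟨δ, (hker d).2 dvd_rfl⟩
  have hα : ∀ m : ℤ, α m = δ m := ZMod.lift_coe d _
  refine ⟨α, (injective_iff_map_eq_zero α).2 fun x hx => ?_, ?_⟩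
  · obtain ⟨m, rfl⟩ := ZMod.intCast_surjective x
    rwa [hα, hker, ← ZMod.intCast_zmod_eq_zero_iff_dvd] at hx
  · ext c
    simp only [AddMonoidHom.mem_range]
    refine ⟨fun ⟨x, hx⟩ => ?_, fun ⟨m, hm⟩ => ⟨m, by rw [hα, hm]⟩⟩
    obtain ⟨m, rfl⟩ := ZMod.intCast_surjective x
    exact ⟨m, by rw [← hα, hx]⟩

theorem Rep.shortExact_of_range_eq_ker {k G : Type u} [CommRing k] [Group G]
    {X : ShortComplex (Rep k G)} (hf : Function.Injective X.f.hom)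
    (hg : Function.Surjective X.g.hom)
    (hfg : LinearMap.range X.f.hom.toLinearMap = LinearMap.ker X.g.hom.toLinearMap) :
    X.ShortExact where
  exact := by
    rw [← ShortComplex.exact_map_iff_of_faithful _ (forget₂ (Rep k G) (ModuleCat k)),
      ShortComplex.moduleCat_exact_iff_range_eq_ker]
    exact hfg
  mono_f := (mono_iff_injective _).2 hf
  epi_g := (epi_iff_surjective _).2 hg

namespace groupCohomology

variable {k G : Type u} [CommRing k] [Group G]

theorem subsingleton_H1_of_isTrivial [Finite G] (A : Rep k G) [A.IsTrivial]
    [IsAddTorsionFree A] : Subsingleton (H1 A) :=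
  have := AddMonoidHom.subsingleton_of_finite_of_isAddTorsionFree (M := Additive G) (N := A)
  (H1IsoOfIsTrivial A).toLinearEquiv.toEquiv.subsingleton

variable {X : ShortComplex (Rep k G)} (hX : X.ShortExact)
include hX

theorem map_surjective_of_subsingleton (n : ℕ) [Subsingleton (groupCohomology X.X₃ n)] :
    Function.Surjective (map (MonoidHom.id G) X.f n).hom := fun y =>
  (ShortComplex.moduleCat_exact_iff _).1 (mapShortComplex₂_exact hX n) y
    (Subsingleton.elim (α := groupCohomology X.X₃ n) _ _)

theorem range_δ_eq_ker_map (n : ℕ) :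
    LinearMap.range (δ hX n (n + 1) rfl).hom =
      LinearMap.ker (map (MonoidHom.id G) X.f (n + 1)).hom :=
  (mapShortComplex₁_exact hX rfl).moduleCat_range_eq_ker

theorem δ₀_H0Iso_inv_eq_zero_iff (z : X.X₃.ρ.invariants) :
    δ hX 0 1 rfl ((H0Iso X.X₃).inv z) = 0 ↔ ∃ y ∈ X.X₂.ρ.invariants, X.g.hom y = z := by
  have hex : LinearMap.range (map (MonoidHom.id G) X.g 0).hom = LinearMap.ker (δ hX 0 1 rfl).hom :=
    (mapShortComplex₃_exact hX rfl).moduleCat_range_eq_ker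
  rw [← LinearMap.mem_ker, ← hex]
  constructor
  · rintro ⟨c, hc⟩
    refine ⟨_, ((H0Iso X.X₂).hom c).2, ?_⟩
    have h := congrArg (H0Iso X.X₃).hom.hom hc
    rw [map_id_comp_H0Iso_hom_apply, Iso.inv_hom_id_apply] at h
    exact congrArg Subtype.val h
  · rintro ⟨y, hy, hyz⟩
    refine ⟨(H0Iso X.X₂).inv ⟨y, hy⟩, ?_⟩
    have h := congrArg (H0Iso X.X₃).inv.hom
      (map_id_comp_H0Iso_hom_apply X.g ((H0Iso X.X₂).inv ⟨y, hy⟩))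
    rw [Iso.hom_inv_id_apply, Iso.inv_hom_id_apply] at h
    exact h.trans (congrArg _ (Subtype.ext hyz))

section IsTrivial

variable [X.X₃.IsTrivial]

theorem δ₀_H0IsoOfIsTrivial_inv_eq_zero_iff (z : X.X₃) :
    δ hX 0 1 rfl ((H0IsoOfIsTrivial X.X₃).inv z) = 0 ↔
      ∃ y ∈ X.X₂.ρ.invariants, X.g.hom y = z :=
  δ₀_H0Iso_inv_eq_zero_iff hX ⟨z, by simp⟩

theorem range_δ₀_comp_H0IsoOfIsTrivial_inv :
    LinearMap.range ((δ hX 0 1 rfl).hom ∘ₗ (H0IsoOfIsTrivial X.X₃).inv.hom) =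
      LinearMap.ker (map (MonoidHom.id G) X.f 1).hom := by
  have hsurj : Function.Surjective (H0IsoOfIsTrivial X.X₃).inv.hom :=
    (H0IsoOfIsTrivial X.X₃).toLinearEquiv.symm.surjective
  rw [LinearMap.range_comp_of_range_eq_top _ (LinearMap.range_eq_top_of_surjective _ hsurj)]
  exact range_δ_eq_ker_map hX 0

end IsTrivial

end groupCohomology

open groupCohomology

theorem h1_ses_onto_int_general (G : Type) [Group G] [Finite G]
    (Q P : Type) [AddCommGroup Q] [Module ℤ Q] [AddCommGroup P] [Module ℤ P]
    (ρQ : Representation ℤ G Q) (ρP : Representation ℤ G P)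
    (i : Q →ₗ[ℤ] P) (hi : Function.Injective i)
    (hiequiv : ∀ g : G, ∀ x : Q, i (ρQ g x) = ρP g (i x))
    (φ : P →ₗ[ℤ] ℤ) (hφ : Function.Surjective φ)
    (hφequiv : ∀ g : G, ∀ x : P, φ (ρP g x) = φ x)
    (hexact : LinearMap.range i = LinearMap.ker φ)
    (d : ℕ)
    (himg : Submodule.map φ ρP.invariants = Submodule.span ℤ {(d : ℤ)}) :
    ∃ (α : ZMod d →+ H1 (Rep.of ρQ)) (β : H1 (Rep.of ρQ) →+ H1 (Rep.of ρP)),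
      Function.Injective α ∧ Function.Surjective β ∧
        AddMonoidHom.range α = AddMonoidHom.ker β := by
  let X : ShortComplex (Rep ℤ G) :=
    { f := Rep.ofHom (i.intertwiningMap_of_isIntertwiningMap ρQ ρP hiequiv)
      g := Rep.ofHom (φ.intertwiningMap_of_isIntertwiningMap ρP (.trivial ℤ G ℤ) hφequiv)
      zero := by
        ext x
        exact hexact.le (LinearMap.mem_range_self i x) }
  have hX : X.ShortExact := Rep.shortExact_of_range_eq_ker hi hφ hexact
  have := subsingleton_H1_of_isTrivial X.X₃
  let δℤ : ℤ →+ H1 (Rep.of ρQ) :=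
    ((δ hX 0 1 rfl).hom ∘ₗ (H0IsoOfIsTrivial X.X₃).inv.hom).toAddMonoidHom
  have hker (m : ℤ) : δℤ m = 0 ↔ (d : ℤ) ∣ m := by
    rw [← Ideal.mem_span_singleton, Ideal.span, ← himg]
    exact δ₀_H0IsoOfIsTrivial_inv_eq_zero_iff hX m
  obtain ⟨α, hα, hrange⟩ := ZMod.exists_lift_injective_range_eq d δℤ hker
  let β : H1 (Rep.of ρQ) →+ H1 (Rep.of ρP) := (map (MonoidHom.id G) X.f 1).hom.toAddMonoidHom
  refine ⟨α, β, hα, map_surjective_of_subsingleton hX 1, ?_⟩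
  rw [hrange, ← LinearMap.range_toAddSubgroup, range_δ₀_comp_H0IsoOfIsTrivial_inv hX,
    LinearMap.ker_toAddSubgroup]

/-- Let `G` be a finite group and `0 → Q → P → ℤ → 0` a short exact sequence of
`G`-modules, where `G` acts trivially on `ℤ`, `P` is `ℤ`-free, and the image of `P^G`
in `ℤ` is `dℤ` for a positive integer `d`. Then there is an exact sequence
`0 → ℤ/dℤ → H¹(G, Q) → H¹(G, P) → 0`. -/
theorem h1_ses_onto_int (G : Type) [Group G] [Finite G]
    (Q P : Type) [AddCommGroup Q] [Module ℤ Q] [AddCommGroup P] [Module ℤ P]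
    [Module.Free ℤ P]
    (ρQ : Representation ℤ G Q) (ρP : Representation ℤ G P)
    (i : Q →ₗ[ℤ] P) (hi : Function.Injective i)
    (hiequiv : ∀ g : G, ∀ x : Q, i (ρQ g x) = ρP g (i x))
    (φ : P →ₗ[ℤ] ℤ) (hφ : Function.Surjective φ)
    (hφequiv : ∀ g : G, ∀ x : P, φ (ρP g x) = φ x)
    (hexact : LinearMap.range i = LinearMap.ker φ)
    (d : ℕ) (hd : 0 < d)
    (himg : Submodule.map φ ρP.invariants = Submodule.span ℤ {(d : ℤ)}) :
    ∃ (α : ZMod d →+ H1 (Rep.of ρQ)) (β : H1 (Rep.of ρQ) →+ H1 (Rep.of ρP)),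
      Function.Injective α ∧ Function.Surjective β ∧
        AddMonoidHom.range α = AddMonoidHom.ker β :=
  h1_ses_onto_int_general G Q P ρQ ρP i hi hiequiv φ hφ hφequiv hexact d himg
end

section
/- Let G = ℤ/2ℤ = ⟨δ⟩ act on the free ℤ-module Q with basis F, F₁′, …, F_{2g+2}′ by δ(F) = F and δ(F_i′) = F − F_i′. Then ker(1 + δ) = { αF + Σ α_i F_i′ : 2α + Σ α_i = 0 }, the submodule (1−δ)Q is generated by the elements 2F_i′ − F, and H¹(G, Q) ≅ (ℤ/2ℤ)^{2g+1}. -/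
set_option linter.unnecessarySeqFocus false in
/-- Let `δ` be the involution of the free `ℤ`-module `Q` with basis
`F, F₁', …, F_{2g+2}'` (modelled as `ℤ × (Fin (2g+2) → ℤ)`, first coordinate the
coefficient of `F`) given by `δ(F) = F`, `δ(Fᵢ') = F - Fᵢ'`.  Then
`ker(1 + δ) = {αF + Σ αᵢFᵢ' : 2α + Σ αᵢ = 0}`, the submodule `(1 - δ)Q` is generated
by the elements `2Fᵢ' - F`, and `H¹(⟨δ⟩, Q) = ker(1+δ)/(1-δ)Q ≅ (ℤ/2ℤ)^{2g+1}`. -/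
theorem de_jonquieres_h1_of_Q (g : ℕ)
    (δ : (ℤ × (Fin (2 * g + 2) → ℤ)) →ₗ[ℤ] (ℤ × (Fin (2 * g + 2) → ℤ)))
    (hδ : ∀ x : ℤ × (Fin (2 * g + 2) → ℤ), δ x = (x.1 + ∑ i, x.2 i, -x.2)) :
    (∀ x : ℤ × (Fin (2 * g + 2) → ℤ),
        x ∈ LinearMap.ker (1 + δ) ↔ 2 * x.1 + ∑ i, x.2 i = 0) ∧
    LinearMap.range (1 - δ) =
      Submodule.span ℤ
        (Set.range fun i : Fin (2 * g + 2) => ((-1 : ℤ), Pi.single i (2 : ℤ))) ∧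
    Nonempty
      (((LinearMap.ker (1 + δ)).toAddSubgroup ⧸
          (LinearMap.range (1 - δ)).toAddSubgroup.addSubgroupOf
            (LinearMap.ker (1 + δ)).toAddSubgroup) ≃+
        (Fin (2 * g + 1) → ZMod 2)) := by
  have hadd : ∀ x : ℤ × (Fin (2 * g + 2) → ℤ),
      (1 + δ) x = (2 * x.1 + ∑ i, x.2 i, 0) := by
    intro x
    rw [LinearMap.add_apply, Module.End.one_apply, hδ]
    ext <;> simp <;> ring
  have hsub : ∀ x : ℤ × (Fin (2 * g + 2) → ℤ),
      (1 - δ) x = (-∑ i, x.2 i, fun i => 2 * x.2 i) := by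
    intro x
    rw [LinearMap.sub_apply, Module.End.one_apply, hδ]
    ext <;> simp <;> ring
  -- Part 1
  have h1 : ∀ x : ℤ × (Fin (2 * g + 2) → ℤ),
      x ∈ LinearMap.ker (1 + δ) ↔ 2 * x.1 + ∑ i, x.2 i = 0 := by
    intro x
    rw [LinearMap.mem_ker, hadd, Prod.ext_iff]
    simp
  -- membership in the range of 1 - δ
  have hmem : ∀ x : ℤ × (Fin (2 * g + 2) → ℤ),
      x ∈ LinearMap.range (1 - δ) ↔
        ∃ b : Fin (2 * g + 2) → ℤ, x = (-∑ i, b i, fun i => 2 * b i) := by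
    intro x
    constructor
    · rintro ⟨y, rfl⟩
      exact ⟨y.2, hsub y⟩
    · rintro ⟨b, rfl⟩
      exact ⟨(0, b), by rw [hsub]⟩
  -- Part 2
  have h2 : LinearMap.range (1 - δ) =
      Submodule.span ℤ
        (Set.range fun i : Fin (2 * g + 2) => ((-1 : ℤ), Pi.single i (2 : ℤ))) := by
    apply le_antisymm
    · rintro x hx
      obtain ⟨b, rfl⟩ := (hmem x).mp hx
      have : ((-∑ i, b i, fun i => 2 * b i) : ℤ × (Fin (2 * g + 2) → ℤ)) =
          ∑ i, b i • ((-1 : ℤ), Pi.single i (2 : ℤ)) := by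
        rw [Prod.ext_iff]
        constructor
        · rw [Prod.fst_sum]
          simp [Finset.sum_neg_distrib]
        · rw [Prod.snd_sum]
          funext j
          simp [Finset.sum_apply, Pi.single_apply, mul_ite, Finset.sum_ite_eq',
            mul_comm]
      rw [this]
      exact Submodule.sum_smul_mem _ _ fun i _ =>
        Submodule.subset_span ⟨i, rfl⟩
    · rw [Submodule.span_le]
      rintro _ ⟨i, rfl⟩
      refine (hmem _).mpr ⟨Pi.single i 1, ?_⟩
      rw [Prod.ext_iff]
      constructor
      · simp
      · funext j
        simp [Pi.single_apply, mul_ite]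
  refine ⟨h1, h2, ?_⟩
  -- Part 3
  set K := (LinearMap.ker (1 + δ)).toAddSubgroup with hK
  have hKmem : ∀ x : ℤ × (Fin (2 * g + 2) → ℤ),
      x ∈ K ↔ 2 * x.1 + ∑ i, x.2 i = 0 := h1
  let φ : K →+ (Fin (2 * g + 1) → ZMod 2) :=
    { toFun := fun x i => ((x : ℤ × (Fin (2 * g + 2) → ℤ)).2 i.castSucc : ZMod 2)
      map_zero' := by funext i; simp
      map_add' := by intro x y; funext i; push_cast; simp }
  have hφ : ∀ (x : K) (i : Fin (2 * g + 1)),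
      φ x i = ((x : ℤ × (Fin (2 * g + 2) → ℤ)).2 i.castSucc : ZMod 2) := fun _ _ => rfl
  have hsurj : Function.Surjective φ := by
    intro c
    set r : Fin (2 * g + 1) → ℤ := fun i => ((c i).val : ℤ) with hr
    set a : Fin (2 * g + 2) → ℤ := Fin.snoc r (-(∑ i, r i)) with ha
    have hmemK : ((0 : ℤ), a) ∈ K := by
      rw [hKmem]
      simp only [ha, Fin.sum_univ_castSucc, Fin.snoc_castSucc, Fin.snoc_last]
      ring
    refine ⟨⟨(0, a), hmemK⟩, ?_⟩
    funext i
    rw [hφ]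
    show ((a i.castSucc : ℤ) : ZMod 2) = c i
    simp [ha, Fin.snoc_castSucc, hr, ZMod.natCast_val, ZMod.cast_id]
  have hker : (LinearMap.range (1 - δ)).toAddSubgroup.addSubgroupOf K = φ.ker := by
    ext x
    rw [AddSubgroup.mem_addSubgroupOf, AddMonoidHom.mem_ker]
    constructor
    · intro hx
      obtain ⟨b, hb⟩ := (hmem _).mp hx
      funext i
      rw [hφ, hb]
      show (((2 : ℤ) * b i.castSucc : ℤ) : ZMod 2) = 0
      exact (ZMod.intCast_zmod_eq_zero_iff_dvd _ 2).mpr ⟨_, rfl⟩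
    · intro hx
      have hdvd : ∀ j : Fin (2 * g + 2), 2 ∣ (x : ℤ × (Fin (2 * g + 2) → ℤ)).2 j := by
        intro j
        induction j using Fin.lastCases with
        | cast i =>
            have := congrFun hx i
            rw [hφ] at this
            simpa using (ZMod.intCast_zmod_eq_zero_iff_dvd _ 2).mp this
        | last =>
            have hx1 := (hKmem _).mp x.2
            rw [Fin.sum_univ_castSucc] at hx1
            have : (x : ℤ × (Fin (2 * g + 2) → ℤ)).2 (Fin.last (2 * g + 1)) =
                -(2 * (x : ℤ × (Fin (2 * g + 2) → ℤ)).1) -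
                  ∑ i : Fin (2 * g + 1),
                    (x : ℤ × (Fin (2 * g + 2) → ℤ)).2 i.castSucc := by linarith
            rw [this]
            refine dvd_sub ⟨-(x : ℤ × (Fin (2 * g + 2) → ℤ)).1, by ring⟩ (Finset.dvd_sum fun i _ => ?_)
            have := congrFun hx i
            rw [hφ] at this
            simpa using (ZMod.intCast_zmod_eq_zero_iff_dvd _ 2).mp this
      choose b hb using hdvd
      refine (hmem _).mpr ⟨b, ?_⟩
      have hsum : ∑ i, (x : ℤ × (Fin (2 * g + 2) → ℤ)).2 i = 2 * ∑ i, b i := by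
        rw [Finset.mul_sum]
        exact Finset.sum_congr rfl fun i _ => hb i
      have hx1 := (hKmem _).mp x.2
      rw [Prod.ext_iff]
      constructor
      · show (x : ℤ × (Fin (2 * g + 2) → ℤ)).1 = -∑ i, b i
        rw [hsum] at hx1; linarith
      · funext j
        exact hb j
  rw [hker]
  exact ⟨QuotientAddGroup.quotientKerEquivOfSurjective φ hsurj⟩
end

section
/- Let G = ℤ/2ℤ and let 0 → Q → P →^φ ℤ → 0 be an exact sequence of G-modules with trivial action on ℤ, where Q is the free ℤ-module with basis F, F₁′, …, F_{2g+2}′ and involution δ(F) = F, δ(F_i′) = F − F_i′, and suppose φ(P^G) = 2ℤ. Then H¹(G, P) ≅ (ℤ/2ℤ)^{2g}. -/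
/-!
For `G = ⟨δ⟩` of order two, a 1-cocycle is determined by its value at `δ`, so
`H¹(G, P) = ker (δ + 1) / im (δ - 1)`. Splitting `P = Q ⊕ ℤe` as groups with `φ e = 1`, the element
`q₀ = δe - e ∈ Q` lies in `ker (δ + 1)` and `H¹(G, P) = ker_Q (δ + 1) / (im_Q (δ - 1) + ℤq₀)`.
On `Q`, reducing the `Fᵢ'`-coordinates mod 2 identifies `ker_Q (δ + 1) / im_Q (δ - 1)` with the
even-weight vectors of `𝔽₂^{2g+2}`, a space of dimension `2g + 1`. The hypothesis `φ(P^G) = 2ℤ`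
says exactly that `q₀ ∉ im_Q (δ - 1)`, i.e. that `q₀` has an odd coordinate, so the quotient by `q₀`
has dimension `2g`.
-/

open groupCohomology Module

/-- `θ` maps `Z` onto `M` and vanishes exactly on `B` there; for subgroups `B ≤ Z` this says that
`θ` induces `Z ⧸ B ≃+ M`. -/
structure AddMonoidHom.IsQuotientMapOn {A M : Type*} [AddCommGroup A] [AddCommGroup M]
    (θ : A →+ M) (Z B : Set A) : Prop where
  exists_mem_eq : ∀ m, ∃ x ∈ Z, θ x = m
  eq_zero_iff : ∀ x ∈ Z, θ x = 0 ↔ x ∈ B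

section CardTwo

variable {G : Type*} [Group G]

theorem eq_one_or_eq_of_card_eq_two (hG : Nat.card G = 2) {δ : G} (hδ : δ ≠ 1) (x : G) :
    x = 1 ∨ x = δ :=
  or_iff_not_imp_left.2 fun hx => ((Nat.card_eq_two_iff' 1).1 hG).unique hx hδ

theorem mul_self_eq_one_of_card_eq_two (hG : Nat.card G = 2) (x : G) : x * x = 1 := by
  rw [← sq, ← hG]
  exact pow_card_eq_one'

theorem Representation.mem_invariants_of_card_eq_two {k V : Type*} [CommRing k] [AddCommGroup V]
    [Module k V] {ρ : Representation k G V} (hG : Nat.card G = 2) {δ : G} (hδ : δ ≠ 1) {v : V}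
    (hv : ρ δ v = v) : v ∈ ρ.invariants := fun g => by
  rcases eq_one_or_eq_of_card_eq_two hG hδ g with rfl | rfl
  · simp
  · exact hv

end CardTwo

universe u

namespace groupCohomology

variable {k G : Type u} [CommRing k] [Group G] {A : Rep k G}

theorem nonempty_H1_addEquiv_of_surjective {M : Type*} [AddCommGroup M]
    (ψ : cocycles₁ A →+ M) (hψ : Function.Surjective ψ)
    (hker : ∀ f, ψ f = 0 ↔ ⇑f ∈ coboundaries₁ A) : Nonempty (H1 A ≃+ M) := by
  let π : cocycles₁ A →+ H1 A := (H1π A).hom.toAddMonoidHom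
  have hπ : Function.Surjective π := fun h => H1_induction_on h fun f => ⟨f, rfl⟩
  have hkers : π.ker = ψ.ker := by
    ext f
    simp only [AddMonoidHom.mem_ker, hker]
    exact H1π_eq_zero_iff f
  exact ⟨(QuotientAddGroup.quotientKerEquivOfSurjective π hπ).symm.trans
    ((QuotientAddGroup.quotientAddEquivOfEq hkers).trans
      (QuotientAddGroup.quotientKerEquivOfSurjective ψ hψ))⟩

theorem cocycles₁_apply_add_eq_zero {δ : G} (hδ : δ * δ = 1) (f : cocycles₁ A) :
    A.ρ δ (f δ) + f δ = 0 := by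
  simpa [hδ] using ((mem_cocycles₁_iff (f : G → A)).1 f.2 δ δ).symm

theorem exists_cocycles₁_apply_eq {δ : G} (hG : ∀ x : G, x = 1 ∨ x = δ) (hδ : δ ≠ 1)
    (hδδ : δ * δ = 1) {x : A} (hx : A.ρ δ x + x = 0) : ∃ f : cocycles₁ A, f δ = x := by
  classical
  refine ⟨⟨fun g => if g = δ then x else 0, (mem_cocycles₁_iff _).2 fun g h => ?_⟩, if_pos rfl⟩
  rcases hG g with rfl | rfl <;> rcases hG h with rfl | rfl <;> simp [hδ.symm, hδδ, hx]

theorem mem_coboundaries₁_iff_of_forall_eq {δ : G} (hG : ∀ x : G, x = 1 ∨ x = δ)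
    (f : cocycles₁ A) : ⇑f ∈ coboundaries₁ A ↔ ∃ y, A.ρ δ y - y = f δ := by
  constructor
  · rintro ⟨y, hy⟩
    exact ⟨y, congrFun hy δ⟩
  · rintro ⟨y, hy⟩
    refine ⟨y, funext fun g => ?_⟩
    rcases hG g with rfl | rfl
    · simp
    · exact hy

theorem nonempty_H1_addEquiv_of_card_eq_two (hG : Nat.card G = 2) {δ : G} (hδ : δ ≠ 1)
    {M : Type*} [AddCommGroup M] {θ : A →+ M}
    (hθ : θ.IsQuotientMapOn {x | A.ρ δ x + x = 0} (Set.range fun y => A.ρ δ y - y)) :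
    Nonempty (H1 A ≃+ M) := by
  have hG' := eq_one_or_eq_of_card_eq_two hG hδ
  have hδδ := mul_self_eq_one_of_card_eq_two hG δ
  refine nonempty_H1_addEquiv_of_surjective
    (θ.comp ((Pi.evalAddMonoidHom (fun _ => A) δ).comp (cocycles₁ A).subtype.toAddMonoidHom))
    (fun m => ?_) fun f => ?_
  · obtain ⟨x, hx, rfl⟩ := hθ.exists_mem_eq m
    obtain ⟨f, rfl⟩ := exists_cocycles₁_apply_eq hG' hδ hδδ hx
    exact ⟨f, rfl⟩
  · exact (hθ.eq_zero_iff _ (cocycles₁_apply_add_eq_zero hδδ f)).trans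
      (mem_coboundaries₁_iff_of_forall_eq hG' f).symm

end groupCohomology

theorem exists_linearMap_isQuotientMapOn_span {K V : Type*} [Field K] [AddCommGroup V]
    [Module K V] [FiniteDimensional K V] {n : ℕ} (hV : finrank K V = n + 2) {f : V →ₗ[K] K}
    (hf : Function.Surjective f) {v₀ : V} (hv₀ : v₀ ≠ 0) (hfv₀ : f v₀ = 0) :
    ∃ L : V →ₗ[K] (Fin n → K),
      L.toAddMonoidHom.IsQuotientMapOn {u | f u = 0} (Set.range fun c : K => c • v₀) := by
  set W : Submodule K (LinearMap.ker f) := K ∙ ⟨v₀, hfv₀⟩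
  have hker : finrank K (LinearMap.ker f) = n + 1 := by
    have := f.finrank_range_add_finrank_ker
    rw [LinearMap.range_eq_top.2 hf, finrank_top, finrank_self] at this
    omega
  have hW : finrank K W = 1 := finrank_span_singleton fun h => hv₀ congr($h.1)
  have hquot : finrank K (LinearMap.ker f ⧸ W) = finrank K (Fin n → K) := by
    have := W.finrank_quotient_add_finrank
    rw [finrank_fin_fun]
    omega
  obtain ⟨r, hr⟩ := (LinearMap.ker f).subtype.exists_leftInverse_of_injective
    (LinearMap.ker_eq_bot.2 Subtype.val_injective)
  have hr' : ∀ u (hu : f u = 0), r u = ⟨u, hu⟩ := fun u hu => LinearMap.congr_fun hr ⟨u, hu⟩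
  refine ⟨(LinearEquiv.ofFinrankEq _ _ hquot).toLinearMap ∘ₗ W.mkQ ∘ₗ r,
    ⟨fun t => ?_, fun u hu => ?_⟩⟩
  · obtain ⟨y, hy⟩ := W.mkQ_surjective ((LinearEquiv.ofFinrankEq _ _ hquot).symm t)
    refine ⟨y, y.2, ?_⟩
    simp [hr' y y.2, hy]
  · simp [hr' u hu, W.mkQ_apply, Submodule.Quotient.mk_eq_zero, W, Submodule.mem_span_singleton,
      Subtype.ext_iff]

section Extension

variable {R Q P : Type*} [CommRing R] [AddCommGroup Q] [Module R Q] [AddCommGroup P] [Module R P]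
  {i : Q →ₗ[R] P} {φ : P →ₗ[R] R} {r : P →ₗ[R] Q} {e : P} {S : Module.End R Q}
  {T : Module.End R P} {q₀ : Q}

theorem LinearMap.exists_retraction_of_range_eq_ker (hi : Function.Injective i)
    (hexact : LinearMap.range i = LinearMap.ker φ) (he : φ e = 1) :
    ∃ r : P →ₗ[R] Q, (∀ u, r (i u) = u) ∧ ∀ p, i (r p) + φ p • e = p := by
  let π : P →ₗ[R] P := LinearMap.id - LinearMap.toSpanSingleton R P e ∘ₗ φ
  have hπ : ∀ p, π p ∈ LinearMap.range i := fun p => by simp [π, hexact, he]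
  let r := (LinearEquiv.ofInjective i hi).symm.toLinearMap ∘ₗ π.codRestrict _ hπ
  have hir : ∀ p, i (r p) = p - φ p • e := fun p =>
    LinearEquiv.ofInjective_symm_apply (h := hi) i (π.codRestrict _ hπ p)
  refine ⟨r, fun u => hi ?_, fun p => by rw [hir, sub_add_cancel]⟩
  have hφi : φ (i u) = 0 := by
    rw [← LinearMap.mem_ker, ← hexact]
    exact LinearMap.mem_range_self i u
  rw [hir, hφi, zero_smul, sub_zero]

theorem apply_retraction_of_add_self_eq_zero [NoZeroDivisors R] [NeZero (2 : R)]
    (hr : ∀ p, i (r p) + φ p • e = p) (hφT : ∀ p, φ (T p) = φ p) {p : P} (hp : T p + p = 0) :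
    i (r p) = p := by
  have hφp : φ p = 0 := by
    have := congrArg φ hp
    rw [map_add, hφT, map_zero, ← two_mul] at this
    exact (mul_eq_zero.1 this).resolve_left two_ne_zero
  simpa [hφp] using hr p

theorem add_self_eq_zero_of_map (hri : ∀ u, r (i u) = u) (hiST : ∀ u, i (S u) = T (i u))
    {u : Q} (hu : T (i u) + i u = 0) : S u + u = 0 := by
  rw [← hri (S u + u), map_add, hiST, hu, map_zero]

theorem add_self_eq_zero_of_involutive (hri : ∀ u, r (i u) = u) (hiST : ∀ u, i (S u) = T (i u))
    (hq₀ : i q₀ = T e - e) (hT : ∀ p, T (T p) = p) : S q₀ + q₀ = 0 :=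
  add_self_eq_zero_of_map hri hiST (by rw [hq₀, map_sub, hT]; abel)

theorem exists_sub_self_eq_map_iff (hri : ∀ u, r (i u) = u) (hr : ∀ p, i (r p) + φ p • e = p)
    (hiST : ∀ u, i (S u) = T (i u)) (hq₀ : i q₀ = T e - e) (x : Q) :
    (∃ y, T y - y = i x) ↔ ∃ u, ∃ c : R, S u - u + c • q₀ = x := by
  have key : ∀ u (c : R), T (i u + c • e) - (i u + c • e) = i (S u - u + c • q₀) := by
    intro u c
    simp only [map_add, map_sub, map_smul, hiST, hq₀, smul_sub]
    abel
  constructor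
  · rintro ⟨y, hy⟩
    refine ⟨r y, φ y, ?_⟩
    rw [← hri (S (r y) - r y + φ y • q₀), ← key, hr, hy, hri]
  · rintro ⟨u, c, rfl⟩
    exact ⟨i u + c • e, key u c⟩

theorem AddMonoidHom.IsQuotientMapOn.comp_retraction [NoZeroDivisors R] [NeZero (2 : R)]
    (hri : ∀ u, r (i u) = u) (hr : ∀ p, i (r p) + φ p • e = p) (hiST : ∀ u, i (S u) = T (i u))
    (hφT : ∀ p, φ (T p) = φ p) (hq₀ : i q₀ = T e - e) {M : Type*} [AddCommGroup M] {θ : Q →+ M}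
    (hθ : θ.IsQuotientMapOn {x | S x + x = 0} {x | ∃ u, ∃ c : R, S u - u + c • q₀ = x}) :
    (θ.comp r.toAddMonoidHom).IsQuotientMapOn {p | T p + p = 0} (Set.range fun y => T y - y) := by
  refine ⟨fun m => ?_, fun p hp => ?_⟩
  · obtain ⟨x, hx, rfl⟩ := hθ.exists_mem_eq m
    refine ⟨i x, ?_, by simp [hri]⟩
    show T (i x) + i x = 0
    rw [← hiST, ← map_add, hx, map_zero]
  · have hp' := apply_retraction_of_add_self_eq_zero hr hφT hp
    show θ (r p) = 0 ↔ ∃ y, T y - y = p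
    rw [hθ.eq_zero_iff _ (add_self_eq_zero_of_map hri hiST (hp'.symm ▸ hp))]
    conv_rhs => rw [← hp']
    exact (exists_sub_self_eq_map_iff hri hr hiST hq₀ (r p)).symm

theorem exists_fixed_of_sub_self_eq (hφi : ∀ u, φ (i u) = 0) (he : φ e = 1)
    (hiST : ∀ u, i (S u) = T (i u)) (hq₀ : i q₀ = T e - e) {u : Q} (hu : S u - u = q₀) :
    ∃ p, T p = p ∧ φ p = 1 := by
  refine ⟨e - i u, ?_, by rw [map_sub, he, hφi, sub_zero]⟩
  rw [map_sub, ← hiST, ← sub_add_cancel (S u) u, hu, map_add, hq₀]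
  abel

end Extension

theorem exists_intCast_comp_eq_smul_iff {ι : Type*} {v y : ι → ℤ} :
    (∃ c : ZMod 2, c • (Int.cast ∘ y) = (Int.cast ∘ v : ι → ZMod 2)) ↔
      ∃ (c : ℤ) (w : ι → ℤ), v = c • y - 2 • w := by
  constructor
  · rintro ⟨c, hc⟩
    have hdvd : ∀ k, (2 : ℤ) ∣ (c.val : ℤ) * y k - v k := fun k => by
      refine (ZMod.intCast_zmod_eq_zero_iff_dvd _ 2).1 ?_
      simpa [sub_eq_zero] using congrFun hc k
    choose w hw using hdvd
    refine ⟨c.val, w, funext fun k => ?_⟩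
    simp only [Pi.sub_apply, Pi.smul_apply, smul_eq_mul, nsmul_eq_mul, Nat.cast_ofNat, Pi.mul_apply,
      Pi.ofNat_apply]
    linarith [hw k]
  · rintro ⟨c, w, rfl⟩
    refine ⟨c, funext fun k => ?_⟩
    simp [show (2 : ZMod 2) = 0 from rfl]

section DeJonquieres

variable {ι : Type*} [Fintype ι]

/-- The involution `F ↦ F`, `Fᵢ' ↦ F - Fᵢ'` in the coordinates `a F + ∑ vᵢ Fᵢ' ↦ (a, v)`. -/
def deJonquieresInvolution (ι : Type*) [Fintype ι] : Module.End ℤ (ℤ × (ι → ℤ)) where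
  toFun x := (x.1 + ∑ k, x.2 k, -x.2)
  map_add' x y := by
    ext <;> simp only [Prod.fst_add, Prod.snd_add, Pi.add_apply, Finset.sum_add_distrib, neg_add]
    ring
  map_smul' c x := by
    ext <;> simp only [Prod.smul_fst, Prod.smul_snd, Pi.smul_apply, smul_eq_mul, Pi.neg_apply,
      RingHom.id_apply, Finset.mul_sum, mul_add, mul_neg]

@[simp]
theorem deJonquieresInvolution_apply (x : ℤ × (ι → ℤ)) :
    deJonquieresInvolution ι x = (x.1 + ∑ k, x.2 k, -x.2) :=
  rfl

theorem deJonquieresInvolution_add_self_eq_zero_iff {x : ℤ × (ι → ℤ)} :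
    deJonquieresInvolution ι x + x = 0 ↔ 2 * x.1 + ∑ k, x.2 k = 0 := by
  simp only [deJonquieresInvolution_apply, Prod.ext_iff, Prod.fst_add, Prod.snd_add,
    neg_add_cancel, Prod.fst_zero, Prod.snd_zero, and_true]
  constructor <;> intro h <;> linarith

theorem deJonquieresInvolution_sub_self_add_smul_snd (u y : ℤ × (ι → ℤ)) (c : ℤ) :
    (deJonquieresInvolution ι u - u + c • y).2 = c • y.2 - 2 • u.2 := by
  ext k
  simp only [Prod.snd_add, Prod.snd_sub, deJonquieresInvolution_apply, Prod.smul_snd, Pi.add_apply,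
    Pi.sub_apply, Pi.neg_apply, Pi.smul_apply, smul_eq_mul]
  ring

/-- On `ker (δ + 1)` the first coordinate is determined by the others. -/
theorem deJonquieresInvolution_sub_self_add_smul_eq {x y : ℤ × (ι → ℤ)}
    (hx : deJonquieresInvolution ι x + x = 0) (hy : deJonquieresInvolution ι y + y = 0) {c : ℤ}
    {w : ι → ℤ} (h : x.2 = c • y.2 - 2 • w) :
    deJonquieresInvolution ι (0, w) - (0, w) + c • y = x := by
  rw [deJonquieresInvolution_add_self_eq_zero_iff] at hx hy
  have hsum : ∑ k, x.2 k = c * ∑ k, y.2 k - 2 * ∑ k, w k := by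
    simp [h, Finset.sum_sub_distrib, Finset.mul_sum]
  refine Prod.ext ?_ (by rw [deJonquieresInvolution_sub_self_add_smul_snd, h])
  have hcy : c * (2 * y.1 + ∑ k, y.2 k) = 0 := by rw [hy, mul_zero]
  simp only [Prod.fst_add, Prod.fst_sub, deJonquieresInvolution_apply, Prod.smul_fst, smul_eq_mul]
  linarith

theorem exists_deJonquieresInvolution_sub_self_eq {q : ℤ × (ι → ℤ)}
    (hq : deJonquieresInvolution ι q + q = 0) (heven : ∀ k, 2 ∣ q.2 k) :
    ∃ u, deJonquieresInvolution ι u - u = q := by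
  choose w hw using heven
  refine ⟨(0, -w), ?_⟩
  simpa using deJonquieresInvolution_sub_self_add_smul_eq (c := 0) (w := -w) hq hq
    (funext fun k => by simp [hw k])

theorem exists_deJonquieresInvolution_add_self_eq_zero {v : ι → ℤ} (hv : 2 ∣ ∑ k, v k) :
    ∃ x, deJonquieresInvolution ι x + x = 0 ∧ x.2 = v := by
  obtain ⟨a, ha⟩ := hv
  exact ⟨(-a, v), deJonquieresInvolution_add_self_eq_zero_iff.2 (by simp only; linarith), rfl⟩

theorem exists_isQuotientMapOn_deJonquieresInvolution {n : ℕ} (hι : Fintype.card ι = n + 2)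
    {q₀ : ℤ × (ι → ℤ)} (hq₀ : deJonquieresInvolution ι q₀ + q₀ = 0) (hodd : ∃ k, ¬ 2 ∣ q₀.2 k) :
    ∃ θ : (ℤ × (ι → ℤ)) →+ (Fin n → ZMod 2),
      θ.IsQuotientMapOn {x | deJonquieresInvolution ι x + x = 0}
        {x | ∃ u, ∃ c : ℤ, deJonquieresInvolution ι u - u + c • q₀ = x} := by
  classical
  obtain ⟨k₀, hk₀⟩ := hodd
  let σ : (ι → ZMod 2) →ₗ[ZMod 2] ZMod 2 := ∑ k, LinearMap.proj k
  have hσ : ∀ u, σ u = ∑ k, u k := by simp [σ]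
  have hσsurj : Function.Surjective σ := fun c => ⟨Pi.single k₀ c, by simp [hσ]⟩
  have hσ_of_mem : ∀ x, deJonquieresInvolution ι x + x = 0 → σ (Int.cast ∘ x.2) = 0 := by
    intro x hx
    have := congrArg (Int.cast : ℤ → ZMod 2) (deJonquieresInvolution_add_self_eq_zero_iff.1 hx)
    simpa [hσ, show (2 : ZMod 2) = 0 from rfl] using this
  have hv₀ : (Int.cast ∘ q₀.2 : ι → ZMod 2) ≠ 0 := fun h =>
    hk₀ ((ZMod.intCast_zmod_eq_zero_iff_dvd _ 2).1 (congrFun h k₀))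
  obtain ⟨L, hL⟩ := exists_linearMap_isQuotientMapOn_span
    (by rw [finrank_fintype_fun_eq_card, hι]) hσsurj hv₀ (hσ_of_mem q₀ hq₀)
  refine ⟨L.toAddMonoidHom.comp
    (((Int.castAddHom (ZMod 2)).compLeft ι).comp (AddMonoidHom.snd _ _)),
    ⟨fun t => ?_, fun x hx => ?_⟩⟩
  · obtain ⟨u, hu, rfl⟩ := hL.exists_mem_eq t
    obtain ⟨x, hx, hx₂⟩ := exists_deJonquieresInvolution_add_self_eq_zero
      (v := fun k => ((u k).val : ℤ)) ((ZMod.intCast_zmod_eq_zero_iff_dvd _ 2).1 (by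
        simpa [hσ, ZMod.cast_id'] using hu))
    refine ⟨x, hx, congrArg L (funext fun k => ?_)⟩
    simp [hx₂]
  · change L.toAddMonoidHom (Int.cast ∘ x.2) = 0 ↔ _
    rw [hL.eq_zero_iff _ (hσ_of_mem x hx), Set.mem_range, exists_intCast_comp_eq_smul_iff]
    constructor
    · rintro ⟨c, w, h⟩
      exact ⟨(0, w), c, deJonquieresInvolution_sub_self_add_smul_eq hx hq₀ h⟩
    · rintro ⟨u, c, rfl⟩
      exact ⟨c, u.2, deJonquieresInvolution_sub_self_add_smul_snd u q₀ c⟩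

end DeJonquieres

theorem de_jonquieres_h1_of_P_general (g : ℕ)
    (G : Type) [Group G] [Fintype G] (hcard : Fintype.card G = 2)
    (δ : G)
    (P : Type) [AddCommGroup P] [Module ℤ P]
    (ρQ : Representation ℤ G (ℤ × (Fin (2 * g + 2) → ℤ)))
    (hρQ : ∀ x : ℤ × (Fin (2 * g + 2) → ℤ), ρQ δ x = (x.1 + ∑ i, x.2 i, -x.2))
    (ρP : Representation ℤ G P)
    (i : (ℤ × (Fin (2 * g + 2) → ℤ)) →ₗ[ℤ] P) (hi : Function.Injective i)
    (hiequiv : ∀ g' : G, ∀ x, i (ρQ g' x) = ρP g' (i x))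
    (φ : P →ₗ[ℤ] ℤ) (hφ : Function.Surjective φ)
    (hφequiv : ∀ g' : G, ∀ x : P, φ (ρP g' x) = φ x)
    (hexact : LinearMap.range i = LinearMap.ker φ)
    (himg : Submodule.map φ ρP.invariants = Submodule.span ℤ {(2 : ℤ)}) :
    Nonempty (H1 (Rep.of ρP) ≃+ (Fin (2 * g) → ZMod 2)) := by
  have hG : Nat.card G = 2 := by rw [Nat.card_eq_fintype_card, hcard]
  have hδ : δ ≠ 1 := by
    rintro rfl
    simpa using congrFun (congrArg Prod.snd (hρQ (0, 1))) 0
  have hiST : ∀ u, i (deJonquieresInvolution _ u) = ρP δ (i u) := fun u => by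
    rw [← hiequiv, hρQ, deJonquieresInvolution_apply]
  obtain ⟨e, he⟩ := hφ 1
  obtain ⟨r, hri, hr⟩ := LinearMap.exists_retraction_of_range_eq_ker hi hexact he
  obtain ⟨q₀, hq₀⟩ : ∃ q₀, i q₀ = ρP δ e - e := by
    rw [← LinearMap.mem_range, hexact, LinearMap.mem_ker, map_sub, hφequiv, sub_self]
  have hq₀ker := add_self_eq_zero_of_involutive hri hiST hq₀ fun p => by
    rw [← Module.End.mul_apply, ← map_mul, mul_self_eq_one_of_card_eq_two hG, map_one,
      Module.End.one_apply]
  have hodd : ∃ k, ¬ 2 ∣ q₀.2 k := by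
    by_contra! heven
    obtain ⟨u, hu⟩ := exists_deJonquieresInvolution_sub_self_eq hq₀ker heven
    have hφi : ∀ u, φ (i u) = 0 := fun u =>
      LinearMap.mem_ker.1 (hexact ▸ LinearMap.mem_range_self i u)
    obtain ⟨p, hTp, hφp⟩ := exists_fixed_of_sub_self_eq hφi he hiST hq₀ hu
    have h1 : (1 : ℤ) ∈ Submodule.span ℤ {(2 : ℤ)} :=
      himg ▸ ⟨p, ρP.mem_invariants_of_card_eq_two hG hδ hTp, hφp⟩
    exact absurd (Ideal.mem_span_singleton.1 h1) (by norm_num)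
  obtain ⟨θ, hθ⟩ := exists_isQuotientMapOn_deJonquieresInvolution (n := 2 * g) (by simp) hq₀ker hodd
  exact nonempty_H1_addEquiv_of_card_eq_two (A := Rep.of ρP) hG hδ
    (hθ.comp_retraction hri hr hiST (hφequiv δ) hq₀)

/-- Let `G = ℤ/2ℤ = ⟨δ⟩` and `0 → Q → P → ℤ → 0` an exact sequence of `G`-modules with
trivial action on `ℤ`, where `Q` is the free `ℤ`-module with basis `F, F₁', …, F_{2g+2}'`
(modelled as `ℤ × (Fin (2g+2) → ℤ)`) and involution `δ(F) = F`, `δ(Fᵢ') = F - Fᵢ'`,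
and suppose the image of `P^G` in `ℤ` is `2ℤ`.  Then `H¹(G, P) ≅ (ℤ/2ℤ)^{2g}`. -/
theorem de_jonquieres_h1_of_P (g : ℕ) (hg : 1 ≤ g)
    (G : Type) [Group G] [Fintype G] (hcard : Fintype.card G = 2)
    (δ : G) (hgen : ∀ x : G, x ∈ Subgroup.zpowers δ)
    (P : Type) [AddCommGroup P] [Module ℤ P]
    (ρQ : Representation ℤ G (ℤ × (Fin (2 * g + 2) → ℤ)))
    (hρQ : ∀ x : ℤ × (Fin (2 * g + 2) → ℤ), ρQ δ x = (x.1 + ∑ i, x.2 i, -x.2))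
    (ρP : Representation ℤ G P)
    (i : (ℤ × (Fin (2 * g + 2) → ℤ)) →ₗ[ℤ] P) (hi : Function.Injective i)
    (hiequiv : ∀ g' : G, ∀ x, i (ρQ g' x) = ρP g' (i x))
    (φ : P →ₗ[ℤ] ℤ) (hφ : Function.Surjective φ)
    (hφequiv : ∀ g' : G, ∀ x : P, φ (ρP g' x) = φ x)
    (hexact : LinearMap.range i = LinearMap.ker φ)
    (himg : Submodule.map φ ρP.invariants = Submodule.span ℤ {(2 : ℤ)}) :
    Nonempty (H1 (Rep.of ρP) ≃+ (Fin (2 * g) → ZMod 2)) :=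
  de_jonquieres_h1_of_P_general g G hcard δ P ρQ hρQ ρP i hi hiequiv φ hφ hφequiv hexact himg
end
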